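/- arXiv:1807.11887 — 4 statements merged into one kernel-verified Lean document; each statement's English description precedes it below -/
import Mathlib

section
/- Let V : ℝ^d → ℝ be continuous, bounded, and nonnegative, and let f : ℝ^d → ℝ be continuous and compactly supported. For ε > 0 define K^ε_V(x,y) := ∫_{ℝ^d} exp(−‖x−z‖²/(2ε)) e^{−V(z)} exp(−‖z−y‖²/(2ε)) dz and T_{K^ε_V} f(x) := ∫_{ℝ^d} K^ε_V(x,y) f(y) dy. Then for every x ∈ ℝ^d, lim_{ε → 0⁺} (2πε)^{−d} T_{K^ε_V} f(x) = e^{−V(x)} f(x). -/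
/-!
Substituting `z = x + √ε • u` and `y = x + √ε • w` produces a Jacobian `ε^d` that cancels the
normalization, so `(2πε)^{-d} T_{K^ε_V} f(x)` is `(2π)^{-d}` times the integral over `(w, u)` of
`exp(-‖u‖²/2) e^{-V(x + √ε • u)} exp(-‖u - w‖²/2) f(x + √ε • w)`. As `ε → 0` this converges
pointwise to `e^{-V(x)} f(x)` times two Gaussians of total mass `(2π)^d`. Since `V ≥ 0` and `f` is
bounded, the integrand is dominated by `C exp(-‖w‖²/8) exp(-‖u‖²/4)`, and dominated convergence
gives the limit.
-/

open MeasureTheory Real Filter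

/-- The reweighted ("sandwich") kernel
`K^ε_V(x,y) = ∫ exp(−‖x−z‖²/(2ε)) e^{−V(z)} exp(−‖z−y‖²/(2ε)) dz`. -/
noncomputable def sandwichKernel {d : ℕ} (V : EuclideanSpace ℝ (Fin d) → ℝ) (ε : ℝ)
    (x y : EuclideanSpace ℝ (Fin d)) : ℝ :=
  ∫ z : EuclideanSpace ℝ (Fin d),
    Real.exp (-‖x - z‖ ^ 2 / (2 * ε)) * Real.exp (-(V z)) * Real.exp (-‖z - y‖ ^ 2 / (2 * ε))

open Module

lemma rexp_neg_sq_norm_mul_rexp_neg_sq_norm_sub_le {E : Type*} [SeminormedAddCommGroup E]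
    (w u : E) :
    rexp (-‖u‖ ^ 2 / 2) * rexp (-‖u - w‖ ^ 2 / 2) ≤
      rexp (-(1 / 8) * ‖w‖ ^ 2) * rexp (-(1 / 4) * ‖u‖ ^ 2) := by
  rw [← exp_add, ← exp_add, exp_le_exp]
  have htri : ‖w‖ ≤ ‖u‖ + ‖u - w‖ := norm_le_norm_add_norm_sub u w
  nlinarith [sq_nonneg (‖u‖ - ‖u - w‖), norm_nonneg u, norm_nonneg (u - w), norm_nonneg w]

lemma integral_comp_add_smul {E F : Type*} [NormedAddCommGroup E] [NormedSpace ℝ E]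
    [FiniteDimensional ℝ E] [MeasurableSpace E] [BorelSpace E] [NormedAddCommGroup F]
    [NormedSpace ℝ F] (μ : Measure E) [μ.IsAddHaarMeasure] (g : E → F) (x : E) {s : ℝ}
    (hs : 0 < s) :
    ∫ z, g z ∂μ = s ^ finrank ℝ E • ∫ u, g (x + s • u) ∂μ := by
  rw [Measure.integral_comp_smul μ (fun v => g (x + v)), integral_add_left_eq_self,
    abs_of_pos (by positivity), smul_smul, mul_inv_cancel₀ (by positivity), one_smul]

section Gaussian

variable {E : Type*} [NormedAddCommGroup E] [InnerProductSpace ℝ E] [FiniteDimensional ℝ E]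
  [MeasurableSpace E] [BorelSpace E]

lemma integrable_rexp_neg_mul_sq_norm {b : ℝ} (hb : 0 < b) :
    Integrable (fun v : E => rexp (-b * ‖v‖ ^ 2)) := by
  have h := (GaussianFourier.integrable_cexp_neg_mul_sq_norm_add (V := E)
      (b := (b : ℂ)) (by simpa using hb) 0 0).norm
  simpa [Complex.norm_exp, ← Complex.ofReal_pow] using h

lemma integrable_rexp_neg_mul_sq_norm_prod {a b : ℝ} (ha : 0 < a) (hb : 0 < b) :
    Integrable (fun p : E × E => rexp (-a * ‖p.1‖ ^ 2) * rexp (-b * ‖p.2‖ ^ 2)) :=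
  (integrable_rexp_neg_mul_sq_norm ha).mul_prod (integrable_rexp_neg_mul_sq_norm hb)

lemma integral_rexp_neg_sq_norm_div_two :
    ∫ v : E, rexp (-‖v‖ ^ 2 / 2) = √(2 * π) ^ finrank ℝ E := by
  have h := GaussianFourier.integral_rexp_neg_mul_sq_norm (V := E) (b := 1 / 2) one_half_pos
  have hv : ∀ v : E, -‖v‖ ^ 2 / 2 = -(1 / 2) * ‖v‖ ^ 2 := fun v => by ring
  simp_rw [hv, h, sqrt_eq_rpow, ← rpow_natCast, ← rpow_mul (by positivity : (0:ℝ) ≤ 2 * π)]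
  congr 1 <;> ring

lemma integral_rexp_neg_sq_norm_mul_rexp_neg_sq_norm_sub :
    ∫ p : E × E, rexp (-‖p.2‖ ^ 2 / 2) * rexp (-‖p.2 - p.1‖ ^ 2 / 2) = (2 * π) ^ finrank ℝ E := by
  have hint : Integrable (fun p : E × E => rexp (-‖p.2‖ ^ 2 / 2) * rexp (-‖p.2 - p.1‖ ^ 2 / 2)) :=
    (integrable_rexp_neg_mul_sq_norm_prod (a := 1 / 8) (b := 1 / 4) (by norm_num)
      (by norm_num)).mono' (by fun_prop) <| ae_of_all _ fun p => by
        rw [norm_of_nonneg (by positivity)]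
        exact rexp_neg_sq_norm_mul_rexp_neg_sq_norm_sub_le p.1 p.2
  have hinner : ∀ u : E, ∫ w : E, rexp (-‖u‖ ^ 2 / 2) * rexp (-‖u - w‖ ^ 2 / 2) =
      rexp (-‖u‖ ^ 2 / 2) * √(2 * π) ^ finrank ℝ E := fun u => by
    simp_rw [integral_const_mul, norm_sub_rev u,
      integral_sub_right_eq_self (fun v : E => rexp (-‖v‖ ^ 2 / 2)),
      integral_rexp_neg_sq_norm_div_two]
  rw [Measure.volume_eq_prod, integral_prod_symm _ hint]
  simp_rw [hinner]
  rw [integral_mul_const, integral_rexp_neg_sq_norm_div_two, ← mul_pow,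
    mul_self_sqrt (by positivity)]

end Gaussian

section RescaledIntegrand

variable {E : Type*} [NormedAddCommGroup E] [NormedSpace ℝ E]

/-- `p = (w, u)` stands for `y = x + s • w` and `z = x + s • u`, with `s = √ε`. -/
noncomputable def rescaledSandwichIntegrand (V f : E → ℝ) (x : E) (s : ℝ) (p : E × E) : ℝ :=
  rexp (-‖p.2‖ ^ 2 / 2) * rexp (-V (x + s • p.2)) * rexp (-‖p.2 - p.1‖ ^ 2 / 2) * f (x + s • p.1)

variable {V f : E → ℝ} {x : E}

lemma continuous_rescaledSandwichIntegrand (hV : Continuous V) (hf : Continuous f) :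
    Continuous fun q : ℝ × (E × E) => rescaledSandwichIntegrand V f x q.1 q.2 := by
  unfold rescaledSandwichIntegrand
  fun_prop

lemma norm_rescaledSandwichIntegrand_le (hVnn : ∀ z, 0 ≤ V z) {C : ℝ} (hC : ∀ y, ‖f y‖ ≤ C)
    (s : ℝ) (p : E × E) :
    ‖rescaledSandwichIntegrand V f x s p‖ ≤
      C * (rexp (-(1 / 8) * ‖p.1‖ ^ 2) * rexp (-(1 / 4) * ‖p.2‖ ^ 2)) := by
  calc ‖rescaledSandwichIntegrand V f x s p‖
      = rexp (-‖p.2‖ ^ 2 / 2) * rexp (-V (x + s • p.2)) * rexp (-‖p.2 - p.1‖ ^ 2 / 2) *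
          ‖f (x + s • p.1)‖ := by
        simp only [rescaledSandwichIntegrand, norm_mul, norm_of_nonneg (exp_pos _).le]
    _ ≤ rexp (-‖p.2‖ ^ 2 / 2) * 1 * rexp (-‖p.2 - p.1‖ ^ 2 / 2) * C := by
        gcongr
        exacts [exp_le_one_iff.2 (neg_nonpos.2 (hVnn _)), hC _]
    _ = C * (rexp (-‖p.2‖ ^ 2 / 2) * rexp (-‖p.2 - p.1‖ ^ 2 / 2)) := by ring
    _ ≤ C * (rexp (-(1 / 8) * ‖p.1‖ ^ 2) * rexp (-(1 / 4) * ‖p.2‖ ^ 2)) :=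
        mul_le_mul_of_nonneg_left (rexp_neg_sq_norm_mul_rexp_neg_sq_norm_sub_le p.1 p.2)
          ((norm_nonneg _).trans (hC x))

end RescaledIntegrand

section RescaledIntegral

variable {E : Type*} [NormedAddCommGroup E] [InnerProductSpace ℝ E] [FiniteDimensional ℝ E]
  [MeasurableSpace E] [BorelSpace E] {V f : E → ℝ} {x : E}

lemma integral_rescaledSandwichIntegrand_zero :
    ∫ p : E × E, rescaledSandwichIntegrand V f x 0 p =
      rexp (-V x) * f x * (2 * π) ^ finrank ℝ E := by
  simp_rw [rescaledSandwichIntegrand, zero_smul, add_zero]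
  rw [← integral_rexp_neg_sq_norm_mul_rexp_neg_sq_norm_sub, ← integral_const_mul]
  congr 1 with p
  ring

lemma integrable_rescaledSandwichIntegrand (hV : Continuous V) (hVnn : ∀ z, 0 ≤ V z)
    (hf : Continuous f) {C : ℝ} (hC : ∀ y, ‖f y‖ ≤ C) (s : ℝ) :
    Integrable (rescaledSandwichIntegrand V f x s) :=
  ((integrable_rexp_neg_mul_sq_norm_prod (by norm_num) (by norm_num)).const_mul C).mono'
    ((continuous_rescaledSandwichIntegrand hV hf).comp
      (Continuous.prodMk_right s)).aestronglyMeasurable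
    (ae_of_all _ (norm_rescaledSandwichIntegrand_le hVnn hC s))

lemma tendsto_integral_rescaledSandwichIntegrand (hV : Continuous V) (hVnn : ∀ z, 0 ≤ V z)
    (hf : Continuous f) {C : ℝ} (hC : ∀ y, ‖f y‖ ≤ C) :
    Tendsto (fun s => ∫ p : E × E, rescaledSandwichIntegrand V f x s p) (nhds 0)
      (nhds (rexp (-V x) * f x * (2 * π) ^ finrank ℝ E)) := by
  have hcont := continuous_rescaledSandwichIntegrand (x := x) hV hf
  rw [← integral_rescaledSandwichIntegrand_zero]
  exact tendsto_integral_filter_of_dominated_convergence _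
    (Eventually.of_forall fun s => (hcont.comp (Continuous.prodMk_right s)).aestronglyMeasurable)
    (Eventually.of_forall fun s => ae_of_all _ (norm_rescaledSandwichIntegrand_le hVnn hC s))
    ((integrable_rexp_neg_mul_sq_norm_prod (by norm_num) (by norm_num)).const_mul C)
    (ae_of_all _ fun p => (hcont.comp (Continuous.prodMk_left p)).tendsto 0)

end RescaledIntegral

section SandwichKernel

variable {d : ℕ} {V f : EuclideanSpace ℝ (Fin d) → ℝ} {x : EuclideanSpace ℝ (Fin d)} {s : ℝ}

lemma sandwichKernel_sq_add_smul (hs : 0 < s) (w : EuclideanSpace ℝ (Fin d)) :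
    sandwichKernel V (s ^ 2) x (x + s • w) =
      s ^ d * ∫ u, rexp (-‖u‖ ^ 2 / 2) * rexp (-V (x + s • u)) * rexp (-‖u - w‖ ^ 2 / 2) := by
  have hscale : ∀ a : ℝ, -(s * a) ^ 2 / (2 * s ^ 2) = -a ^ 2 / 2 := fun a => by
    field_simp
  rw [sandwichKernel, integral_comp_add_smul volume _ x hs, finrank_euclideanSpace_fin,
    smul_eq_mul]
  refine congrArg (s ^ d * ·) (integral_congr_ae (ae_of_all _ fun u => ?_))
  dsimp only
  rw [sub_add_cancel_left, norm_neg, add_sub_add_left_eq_sub, ← smul_sub, norm_smul, norm_smul,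
    norm_of_nonneg hs.le, hscale, hscale]

lemma integral_sandwichKernel_sq_mul (hs : 0 < s)
    (hint : Integrable (rescaledSandwichIntegrand V f x s)) :
    ∫ y, sandwichKernel V (s ^ 2) x y * f y =
      (s ^ 2) ^ d * ∫ p, rescaledSandwichIntegrand V f x s p := by
  have hinner : ∀ w, sandwichKernel V (s ^ 2) x (x + s • w) * f (x + s • w) =
      s ^ d * ∫ u, rescaledSandwichIntegrand V f x s (w, u) := fun w => by
    rw [sandwichKernel_sq_add_smul hs, mul_assoc, ← integral_mul_const]
    rfl
  rw [integral_comp_add_smul volume _ x hs, finrank_euclideanSpace_fin, smul_eq_mul]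
  simp_rw [hinner]
  rw [integral_const_mul, Measure.volume_eq_prod,
    integral_integral (f := fun w u => rescaledSandwichIntegrand V f x s (w, u)) hint]
  ring

end SandwichKernel

theorem sandwichKernel_operator_limit_general {d : ℕ} (V f : EuclideanSpace ℝ (Fin d) → ℝ)
    (hV : Continuous V) (hVnn : ∀ z, 0 ≤ V z)
    (hf : Continuous f) (hfsupp : HasCompactSupport f) (x : EuclideanSpace ℝ (Fin d)) :
    Tendsto (fun ε : ℝ =>
        (2 * Real.pi * ε) ^ (-(d : ℝ)) *
          ∫ y : EuclideanSpace ℝ (Fin d), sandwichKernel V ε x y * f y)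
      (nhdsWithin 0 (Set.Ioi 0)) (nhds (Real.exp (-(V x)) * f x)) := by
  obtain ⟨C, hC⟩ := hfsupp.exists_bound_of_continuous hf
  have hsqrt : Tendsto (fun ε : ℝ => √ε) (nhdsWithin 0 (Set.Ioi 0)) (nhds 0) :=
    (continuous_sqrt.tendsto' 0 0 sqrt_zero).mono_left nhdsWithin_le_nhds
  have hlim : Tendsto (fun ε => ((2 * π) ^ d)⁻¹ * ∫ p, rescaledSandwichIntegrand V f x √ε p)
      (nhdsWithin 0 (Set.Ioi 0)) (nhds (rexp (-V x) * f x)) := by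
    convert ((tendsto_integral_rescaledSandwichIntegrand (x := x) hV hVnn hf hC).comp
      hsqrt).const_mul ((2 * π) ^ d)⁻¹ using 2
    · rfl
    · rw [finrank_euclideanSpace_fin]
      field_simp
  refine hlim.congr' ?_
  filter_upwards [self_mem_nhdsWithin] with ε (hε : 0 < ε)
  have hkernel := integral_sandwichKernel_sq_mul (sqrt_pos.2 hε)
    (integrable_rescaledSandwichIntegrand (x := x) hV hVnn hf hC √ε)
  rw [sq_sqrt hε.le] at hkernel
  rw [hkernel, rpow_neg (by positivity), rpow_natCast, mul_pow]
  field_simp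
  ring

/-- **Leading-order limit of the reweighted kernel operator.** For `V` continuous, bounded and
nonnegative, and `f` continuous with compact support, for every `x`,
`(2πε)^{−d} ∫ K^ε_V(x,y) f(y) dy → e^{−V(x)} f(x)` as `ε → 0⁺`. -/
theorem sandwichKernel_operator_limit {d : ℕ} (V f : EuclideanSpace ℝ (Fin d) → ℝ)
    (hV : Continuous V) (hVbdd : ∃ M : ℝ, ∀ z, V z ≤ M) (hVnn : ∀ z, 0 ≤ V z)
    (hf : Continuous f) (hfsupp : HasCompactSupport f) (x : EuclideanSpace ℝ (Fin d)) :
    Tendsto (fun ε : ℝ =>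
        (2 * Real.pi * ε) ^ (-(d : ℝ)) *
          ∫ y : EuclideanSpace ℝ (Fin d), sandwichKernel V ε x y * f y)
      (nhdsWithin 0 (Set.Ioi 0)) (nhds (Real.exp (-(V x)) * f x)) :=
  sandwichKernel_operator_limit_general V f hV hVnn hf hfsupp x
end

section
/- Let K be an n × n real symmetric positive definite matrix. For a subset S of the index set {1,…,n}, let K[S] denote the principal submatrix of K with rows and columns indexed by S (with det K[∅] = 1). Then the set function S ↦ log det K[S] is submodular: for all subsets S ⊆ T of {1,…,n} and every index i ∉ T, log det K[T ∪ {i}] − log det K[T] ≤ log det K[S ∪ {i}] − log det K[S]. -/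
/-!
`det K[U ∪ {i}] / det K[U]` is the Schur complement of `K[U]` in `K[U ∪ {i}]`, and completing
the square shows that it is the minimum of the quadratic form `wᵀ K w` over the vectors
`w = eᵢ - z` with `z` supported on `U` (the residual variance of coordinate `i` after
regressing on the coordinates in `U`). Enlarging `U` enlarges the set over which the minimum is
taken, so the ratio decreases; taking logarithms gives submodularity.
-/

open Matrix

/-- The principal submatrix of `K` with rows and columns indexed by the finite set `S`. -/
def principalSubmatrix {n : Type*} (K : Matrix n n ℝ) (S : Finset n) :
    Matrix {a // a ∈ S} {a // a ∈ S} ℝ :=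
  K.submatrix (fun a => a.1) (fun a => a.1)

open Function

theorem Matrix.PosDef.isLeast_dotProduct_mulVec_sumElim_one {m : Type*} [Fintype m]
    [DecidableEq m] {M : Matrix (m ⊕ Unit) (m ⊕ Unit) ℝ} (hM : M.PosDef) :
    IsLeast (Set.range fun x : m → ℝ => (x ⊕ᵥ 1) ⬝ᵥ M *ᵥ (x ⊕ᵥ 1))
      (M.det / M.toBlocks₁₁.det) := by
  set A := M.toBlocks₁₁
  set B := M.toBlocks₁₂
  set D := M.toBlocks₂₂
  have hA : A.PosDef := hM.submatrix Sum.inl_injective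
  have : Invertible A := A.invertibleOfIsUnitDet hA.det_pos.ne'.isUnit
  have hblocks : M = fromBlocks A B Bᴴ D := by
    conv_lhs => rw [← fromBlocks_toBlocks M]
    congr 1
    ext a b
    exact (hM.1.apply _ _).symm
  set s := (D - Bᴴ * A⁻¹ * B) () ()
  have hdet : M.det / A.det = s := by
    rw [hblocks, det_fromBlocks₁₁, det_unique (D - _), invOf_eq_nonsing_inv,
      mul_div_cancel_left₀ _ hA.det_pos.ne']
  have hsquare : ∀ x, (x ⊕ᵥ 1) ⬝ᵥ M *ᵥ (x ⊕ᵥ 1) =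
      (x + (A⁻¹ * B) *ᵥ 1) ⬝ᵥ A *ᵥ (x + (A⁻¹ * B) *ᵥ 1) + s := fun x => by
    have := schur_complement_eq₁₁ B D x 1 hA.1
    simp only [star_trivial, ← dotProduct_mulVec, ← hblocks] at this
    rw [this]
    simp [s, dotProduct, mulVec]
  refine ⟨⟨-((A⁻¹ * B) *ᵥ 1), by simp [hsquare, hdet]⟩, ?_⟩
  rintro _ ⟨x, rfl⟩
  simp only [hdet, hsquare]
  exact le_add_of_nonneg_left
    (by simpa only [star_trivial] using hA.posSemidef.dotProduct_mulVec_nonneg _)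

theorem Matrix.dotProduct_mulVec_submatrix_comp {R m n : Type*} [CommSemiring R] [Fintype m]
    [Fintype n] (K : Matrix n n R) {g : m → n} (hg : Injective g) {w : n → R}
    (hw : support w ⊆ Set.range g) :
    (w ∘ g) ⬝ᵥ K.submatrix g g *ᵥ (w ∘ g) = w ⬝ᵥ K *ᵥ w := by
  rw [support_subset_iff'] at hw
  have hmulVec : ∀ a, (K.submatrix g g *ᵥ (w ∘ g)) a = (K *ᵥ w) (g a) := fun a =>
    Fintype.sum_of_injective g hg _ _ (fun j hj => by simp [hw j hj]) fun _ => rfl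
  exact Fintype.sum_of_injective g hg _ _ (fun j hj => by simp [hw j hj])
    fun a => by simp [hmulVec]

theorem Matrix.image_dotProduct_mulVec_single_sub_eq_range {R m n : Type*} [CommRing R]
    [Fintype m] [Fintype n] [DecidableEq n] (K : Matrix n n R) {g : m → n} (hg : Injective g)
    {i : n} (hi : i ∉ Set.range g) :
    (fun z => (Pi.single i 1 - z) ⬝ᵥ K *ᵥ (Pi.single i 1 - z)) ''
        {z : n → R | support z ⊆ Set.range g} =
      Set.range fun x : m → R => (x ⊕ᵥ 1) ⬝ᵥ
        K.submatrix (Sum.elim g fun _ : Unit => i) (Sum.elim g fun _ : Unit => i) *ᵥ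
          (x ⊕ᵥ 1) := by
  set G : m ⊕ Unit → n := Sum.elim g fun _ => i
  have hG : Injective G := hg.sumElim (injective_of_subsingleton _) fun a _ h => hi ⟨a, h⟩
  set V := {z : n → R | support z ⊆ Set.range g}
  set r : (n → R) → m → R := fun z => -(z ∘ g)
  have hsupp : ∀ z ∈ V, support (Pi.single i 1 - z) ⊆ Set.range G := fun z hz => by
    refine support_subset_iff'.mpr fun j hj => ?_
    have hji : j ≠ i := fun h => hj ⟨Sum.inr (), h.symm⟩
    have hjg : j ∉ Set.range g := fun ⟨a, ha⟩ => hj ⟨Sum.inl a, ha⟩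
    simp [Pi.single_eq_of_ne hji, support_subset_iff'.mp hz j hjg]
  have hcomp : ∀ z ∈ V, (Pi.single i 1 - z) ∘ G = r z ⊕ᵥ 1 := fun z hz => by
    funext x
    rcases x with a | _
    · simp [G, r, Pi.single_eq_of_ne fun h => hi ⟨a, h⟩]
    · simp [G, support_subset_iff'.mp hz i hi]
  have hsurj : r '' V = Set.univ := by
    refine Set.eq_univ_of_forall fun x => ⟨extend g (-x) 0, ?_, ?_⟩
    · exact support_subset_iff'.mpr fun j hj => extend_apply' _ _ _ hj
    · funext a
      simp [r, hg.extend_apply]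
  calc _ = (fun x => (x ⊕ᵥ 1) ⬝ᵥ K.submatrix G G *ᵥ (x ⊕ᵥ 1)) ∘ r '' V := by
        refine Set.image_congr fun z hz => ?_
        rw [Function.comp_apply, ← hcomp z hz,
          dotProduct_mulVec_submatrix_comp K hG (hsupp z hz)]
    _ = _ := by rw [Set.image_comp, hsurj, Set.image_univ]

theorem det_principalSubmatrix_eq_det_submatrix {m n : Type*} [Fintype m] [DecidableEq m]
    [DecidableEq n] (K : Matrix n n ℝ) {S : Finset n} {g : m → n} (hg : Injective g)
    (hS : Set.range g = S) : (principalSubmatrix K S).det = (K.submatrix g g).det := by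
  let e : m ≃ {a // a ∈ S} :=
    (Equiv.ofInjective g hg).trans (Equiv.subtypeEquivRight fun a => by rw [hS, Finset.mem_coe])
  exact (det_submatrix_equiv_self e _).symm

theorem Matrix.PosDef.isLeast_det_principalSubmatrix_insert_div {n : Type*} [Fintype n]
    [DecidableEq n] {K : Matrix n n ℝ} (hK : K.PosDef) {U : Finset n} {i : n} (hi : i ∉ U) :
    IsLeast ((fun z => (Pi.single i 1 - z) ⬝ᵥ K *ᵥ (Pi.single i 1 - z)) ''
        {z : n → ℝ | support z ⊆ U})
      ((principalSubmatrix K (insert i U)).det / (principalSubmatrix K U).det) := by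
  set G : {a // a ∈ U} ⊕ Unit → n := Sum.elim Subtype.val fun _ => i
  have hG : Injective G :=
    Subtype.val_injective.sumElim (injective_of_subsingleton _) fun a _ h => hi (h ▸ a.2)
  have hrange : Set.range G = ↑(insert i U) := by
    ext j
    simp [G, eq_comm]
  have himage := image_dotProduct_mulVec_single_sub_eq_range K Subtype.val_injective
    (i := i) (by simpa using hi)
  rw [Subtype.range_coe_subtype] at himage
  rw [det_principalSubmatrix_eq_det_submatrix K hG hrange]
  exact himage ▸ (hK.submatrix hG).isLeast_dotProduct_mulVec_sumElim_one

/-- **Submodularity of log-determinant.** Let `K` be an `n × n` real symmetric positive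
definite matrix. For subsets `S ⊆ T` of the index set and an index `i ∉ T`,
`log det K[T ∪ {i}] − log det K[T] ≤ log det K[S ∪ {i}] − log det K[S]`. -/
theorem logdet_submodular {n : ℕ} (K : Matrix (Fin n) (Fin n) ℝ) (hK : K.PosDef)
    (S T : Finset (Fin n)) (hST : S ⊆ T) (i : Fin n) (hi : i ∉ T) :
    Real.log (principalSubmatrix K (insert i T)).det -
        Real.log (principalSubmatrix K T).det
      ≤ Real.log (principalSubmatrix K (insert i S)).det -
          Real.log (principalSubmatrix K S).det := by
  have hdet_pos : ∀ U, 0 < (principalSubmatrix K U).det := fun U =>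
    (hK.submatrix Subtype.val_injective).det_pos
  have hT := hK.isLeast_det_principalSubmatrix_insert_div hi
  have hS := hK.isLeast_det_principalSubmatrix_insert_div fun h => hi (hST h)
  have hmono := hS.mono hT (Set.image_mono fun z hz => hz.trans (Finset.coe_subset.mpr hST))
  rw [← Real.log_div (hdet_pos _).ne' (hdet_pos _).ne',
    ← Real.log_div (hdet_pos _).ne' (hdet_pos _).ne']
  exact Real.log_le_log (div_pos (hdet_pos _) (hdet_pos _)) hmono
end

section
/- Let α be a nonempty finite type and f : Finset α → ℝ a set function satisfying: (i) f(∅) = 0; (ii) monotonicity, i.e. f(S) ≤ f(T) whenever S ⊆ T; and (iii) submodularity, i.e. f(S ∪ {i}) − f(S) ≥ f(T ∪ {i}) − f(T) for all S ⊆ T and i ∉ T. Let x_1, x_2, …, x_n be chosen greedily: for each k, x_{k+1} maximizes x ↦ f({x_1,…,x_k} ∪ {x}) over all x ∈ α. Then f({x_1,…,x_n}) ≥ (1 − 1/e) · max { f(S) : S ⊆ α, |S| = n }, where e is Euler's number. -/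
/-!
Let `G_k = {x 0, …, x (k-1)}` be the greedy set after `k` steps and `S` any set of size `n`.
By monotonicity and submodularity, adding the elements of `S` to `G_k` one at a time gains at
most `n` times the best single-element gain, which is the greedy gain at step `k`. Hence the
gap `f S - f G_k` shrinks by a factor `1 - 1/n` at every step, so after `n` steps it is at most
`(1 - 1/n)^n f S ≤ f S / e`.
-/

open Finset

def Submodular {α : Type*} [DecidableEq α] (f : Finset α → ℝ) : Prop :=
  ∀ S T : Finset α, S ⊆ T → ∀ i ∉ T, f (insert i T) - f T ≤ f (insert i S) - f S

namespace Submodular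

variable {α : Type*} [DecidableEq α] {f : Finset α → ℝ}

theorem union_sub_le_sum_marginal (hf : Submodular f) {G A : Finset α}
    (hGA : Disjoint G A) : f (G ∪ A) - f G ≤ ∑ a ∈ A, (f (insert a G) - f G) := by
  induction A using Finset.induction_on with
  | empty => simp
  | @insert a A ha ih =>
    obtain ⟨haG, hGA⟩ := disjoint_insert_right.mp hGA
    have hgain : f (insert a (G ∪ A)) - f (G ∪ A) ≤ f (insert a G) - f G :=
      hf G (G ∪ A) subset_union_left a (by simp [haG, ha])
    rw [union_insert, sum_insert ha]
    linarith [ih hGA]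

theorem le_add_card_mul (hf : Submodular f) (hmono : Monotone f) (G S : Finset α)
    {δ : ℝ} (hδ : 0 ≤ δ) (hgain : ∀ a, f (insert a G) - f G ≤ δ) :
    f S ≤ f G + S.card * δ := by
  have hcard : ((S \ G).card : ℝ) ≤ S.card := by exact_mod_cast card_le_card sdiff_subset
  calc f S ≤ f (G ∪ (S \ G)) := hmono (by simp)
    _ ≤ f G + ∑ a ∈ S \ G, (f (insert a G) - f G) := by
        linarith [hf.union_sub_le_sum_marginal (G := G) (A := S \ G) disjoint_sdiff]
    _ ≤ f G + (S \ G).card * δ := by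
        simpa using sum_le_sum fun a _ => hgain a
    _ ≤ f G + S.card * δ := by gcongr

end Submodular

theorem sub_le_one_sub_inv_pow_mul {g : ℕ → ℝ} {c : ℝ} {n : ℕ} (hn : 0 < n)
    (hstep : ∀ k < n, c - g k ≤ n * (g (k + 1) - g k)) :
    ∀ k ≤ n, c - g k ≤ (1 - 1 / n) ^ k * (c - g 0) := by
  have hnR : (0 : ℝ) < n := by exact_mod_cast hn
  have hratio : 0 ≤ 1 - 1 / (n : ℝ) := by
    rw [sub_nonneg, div_le_one hnR]
    exact_mod_cast hn
  intro k hk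
  induction k with
  | zero => simp
  | succ k ih =>
    have hcontract : c - g (k + 1) ≤ (1 - 1 / n) * (c - g k) := by
      have hgain : (c - g k) / n ≤ g (k + 1) - g k := (div_le_iff₀' hnR).mpr (hstep k hk)
      linarith [show (1 - 1 / (n : ℝ)) * (c - g k) = c - g k - (c - g k) / n by ring]
    calc c - g (k + 1) ≤ (1 - 1 / n) * (c - g k) := hcontract
      _ ≤ (1 - 1 / n) * ((1 - 1 / n) ^ k * (c - g 0)) := by gcongr; exact ih (by omega)
      _ = (1 - 1 / n) ^ (k + 1) * (c - g 0) := by ring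

theorem greedy_submodular_guarantee_general {α : Type*} [DecidableEq α]
    (f : Finset α → ℝ)
    (hempty : f ∅ = 0)
    (hmono : ∀ S T : Finset α, S ⊆ T → f S ≤ f T)
    (hsub : ∀ S T : Finset α, S ⊆ T → ∀ i ∉ T,
      f (insert i T) - f T ≤ f (insert i S) - f S)
    (n : ℕ) (x : ℕ → α)
    (hgreedy : ∀ k < n, ∀ y : α,
      f (insert y ((Finset.range k).image x)) ≤ f (insert (x k) ((Finset.range k).image x)))
    (S : Finset α) (hS : S.card = n) :
    (1 - 1 / Real.exp 1) * f S ≤ f ((Finset.range n).image x) := by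
  have hf_mono : Monotone f := fun S T => hmono S T
  rcases Nat.eq_zero_or_pos n with rfl | hn
  · simp [card_eq_zero.mp hS, hempty]
  have hfS : 0 ≤ f S := hempty ▸ hf_mono (empty_subset S)
  set g : ℕ → ℝ := fun k => f ((range k).image x) with hg
  have hstep : ∀ k < n, f S - g k ≤ n * (g (k + 1) - g k) := by
    intro k hk
    have hnext : g (k + 1) = f (insert (x k) ((range k).image x)) := by
      simp [hg, range_add_one, image_insert]
    have hbound := Submodular.le_add_card_mul hsub hf_mono ((range k).image x) S
      (δ := g (k + 1) - g k)
      (by rw [hnext]; linarith [hf_mono (subset_insert (x k) ((range k).image x))])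
      (fun a => by rw [hnext]; linarith [hgreedy k hk a])
    rw [hS] at hbound
    linarith
  have hgap := sub_le_one_sub_inv_pow_mul hn hstep n le_rfl
  have hexp : (1 - 1 / (n : ℝ)) ^ n ≤ 1 / Real.exp 1 := by
    simpa [Real.exp_neg] using
      Real.one_sub_div_pow_le_exp_neg (t := 1) (n := n) (by exact_mod_cast hn)
  have hg0 : g 0 = 0 := by simp [hg, hempty]
  rw [hg0, sub_zero] at hgap
  linarith [mul_le_mul_of_nonneg_right hexp hfS]

/-- **(1 − 1/e) guarantee for greedy maximization of a monotone submodular function.**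
Let `f` be a set function on a nonempty finite ground set with `f ∅ = 0`, monotone, and
submodular. If `x 0, x 1, …` are chosen greedily (each `x k` maximizes the value of `f` on
the current set extended by one element), then for every subset `S` of cardinality `n`,
`f({x 0, …, x (n−1)}) ≥ (1 − 1/e) · f S`; that is, the greedy value is at least
`(1 − 1/e)` times `max { f(S) : |S| = n }`. -/
theorem greedy_submodular_guarantee {α : Type*} [Fintype α] [Nonempty α] [DecidableEq α]
    (f : Finset α → ℝ)
    (hempty : f ∅ = 0)
    (hmono : ∀ S T : Finset α, S ⊆ T → f S ≤ f T)
    (hsub : ∀ S T : Finset α, S ⊆ T → ∀ i ∉ T,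
      f (insert i T) - f T ≤ f (insert i S) - f S)
    (n : ℕ) (x : ℕ → α)
    (hgreedy : ∀ k < n, ∀ y : α,
      f (insert y ((Finset.range k).image x)) ≤ f (insert (x k) ((Finset.range k).image x)))
    (S : Finset α) (hS : S.card = n) :
    (1 - 1 / Real.exp 1) * f S ≤ f ((Finset.range n).image x) :=
  greedy_submodular_guarantee_general f hempty hmono hsub n x hgreedy S hS
end

section
/- Let t > 0, let x_1, …, x_n be pairwise distinct points in ℝ^d, and let A be the n × n real matrix with entries A_{ij} = exp(−‖x_i − x_j‖²/t). Then A is positive definite: for every nonzero c ∈ ℝ^n, Σ_{i=1}^n Σ_{j=1}^n c_i c_j exp(−‖x_i − x_j‖²/t) > 0. -/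
/-!
Writing `‖x - y‖² = ‖x‖² - 2⟪x, y⟫ + ‖y‖²` turns the Gaussian matrix into a diagonal congruence of
`exp (s ⟪xᵢ, xⱼ⟫)` with `s = 2 / t`, whose quadratic form is the power series
`∑ₖ sᵏ / k! · ∑ᵢⱼ bᵢ bⱼ ⟪xᵢ, xⱼ⟫ᵏ`. Each coefficient is nonnegative by the Schur product theorem.
If all of them vanished, then `∑ᵢ bᵢ ⟪xᵢ, y⟫ᵏ = 0` for every `y` and `k`; choosing `y` so that
the numbers `⟪xᵢ, y⟫` are distinct, the Vandermonde matrix forces `b = 0`.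
-/

open Real Matrix Function RealInnerProductSpace
open scoped Nat

section

variable {ι E : Type*} [NormedAddCommGroup E] [InnerProductSpace ℝ E]

lemma Matrix.star_dotProduct_of_mulVec [Fintype ι] (f : ι → ι → ℝ) (b : ι → ℝ) :
    star b ⬝ᵥ of f *ᵥ b = ∑ i, ∑ j, b i * b j * f i j := by
  simp only [dotProduct, mulVec, Finset.mul_sum, star_trivial, of_apply]
  exact Finset.sum_congr rfl fun i _ => Finset.sum_congr rfl fun j _ => by ring

theorem posSemidef_inner_pow [Finite ι] (x : ι → E) (k : ℕ) :
    (of fun i j => ⟪x i, x j⟫ ^ k).PosSemidef := by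
  induction k with
  | zero => simpa [gram] using posSemidef_gram ℝ fun _ : ι => (1 : ℝ)
  | succ k ih =>
    have h : (of fun i j => ⟪x i, x j⟫ ^ (k + 1))
        = (of fun i j => ⟪x i, x j⟫ ^ k) ⊙ gram ℝ x := by
      ext i j
      simp [gram, pow_succ]
    rw [h]
    exact ih.hadamard (posSemidef_gram ℝ x)

theorem sum_sum_mul_inner_pow_nonneg [Fintype ι] (x : ι → E) (b : ι → ℝ) (k : ℕ) :
    0 ≤ ∑ i, ∑ j, b i * b j * ⟪x i, x j⟫ ^ k := by
  rw [← star_dotProduct_of_mulVec]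
  exact (posSemidef_inner_pow x k).dotProduct_mulVec_nonneg b

theorem sum_mul_inner_pow_eq_zero_of_sum_sum_mul_inner_pow_eq_zero [Fintype ι]
    {x : ι → E} {b : ι → ℝ} {k : ℕ} (hb : ∑ i, ∑ j, b i * b j * ⟪x i, x j⟫ ^ k = 0) (y : E) :
    ∑ i, b i * ⟪x i, y⟫ ^ k = 0 := by
  -- Adjoin `y` to the family: the positive semidefinite matrix then kills `(b, 0)`,
  -- and the row of `y` is the claim.
  let x' : Option ι → E := fun o => o.elim y x
  let b' : Option ι → ℝ := fun o => o.elim 0 b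
  have hquad : star b' ⬝ᵥ (of fun i j => ⟪x' i, x' j⟫ ^ k) *ᵥ b' = 0 := by
    rw [star_dotProduct_of_mulVec]
    simpa [Fintype.sum_option, x', b'] using hb
  have := congrFun (((posSemidef_inner_pow x' k).dotProduct_mulVec_zero_iff b').mp hquad) none
  simpa [mulVec, dotProduct, Fintype.sum_option, real_inner_comm, mul_comm, x', b'] using this

theorem exists_injective_inner [Finite ι] {x : ι → E} (hx : Injective x) :
    ∃ y : E, Injective fun i => ⟪x i, y⟫ := by
  -- `y` has to avoid the finitely many proper hyperplanes `(x i - x j)ᗮ`.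
  have hcov : ⋃ p : {p : ι × ι // p.1 ≠ p.2},
      (LinearMap.ker (innerₛₗ ℝ (x p.1.1 - x p.1.2)) : Set E) ≠ Set.univ := by
    intro h
    obtain ⟨⟨⟨i, j⟩, hij⟩, htop⟩ := Subspace.exists_eq_top_of_iUnion_eq_univ h
    have hmem : x i - x j ∈ LinearMap.ker (innerₛₗ ℝ (x i - x j)) := htop ▸ Submodule.mem_top
    simp only [LinearMap.mem_ker, innerₛₗ_apply_apply, inner_self_eq_zero, sub_eq_zero] at hmem
    exact hij (hx hmem)
  obtain ⟨y, hy⟩ := (Set.ne_univ_iff_exists_notMem _).mp hcov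
  refine ⟨y, fun i j hij => by_contra fun hne => hy (Set.mem_iUnion.mpr ⟨⟨(i, j), hne⟩, ?_⟩)⟩
  simpa [inner_sub_left, sub_eq_zero] using hij

theorem Real.hasSum_pow_div_factorial_exp (x : ℝ) : HasSum (fun k => x ^ k / k !) (exp x) := by
  rw [exp_eq_exp_ℝ]
  exact NormedSpace.expSeries_div_hasSum_exp x

theorem hasSum_sum_sum_mul_exp_mul_inner [Fintype ι] (x : ι → E) (b : ι → ℝ) (s : ℝ) :
    HasSum (fun k => s ^ k / k ! * ∑ i, ∑ j, b i * b j * ⟪x i, x j⟫ ^ k)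
      (∑ i, ∑ j, b i * b j * exp (s * ⟪x i, x j⟫)) := by
  have hexp (i j : ι) : HasSum (fun k => b i * b j * ((s * ⟪x i, x j⟫) ^ k / k !))
      (b i * b j * exp (s * ⟪x i, x j⟫)) :=
    (hasSum_pow_div_factorial_exp _).mul_left _
  convert hasSum_sum fun i _ => hasSum_sum fun j _ => hexp i j using 1
  ext k
  simp only [Finset.mul_sum, mul_pow]
  exact Finset.sum_congr rfl fun i _ => Finset.sum_congr rfl fun j _ => by ring

theorem sum_sum_mul_exp_mul_inner_pos {n : ℕ} {s : ℝ} (hs : 0 < s) {x : Fin n → E}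
    (hx : Injective x) {b : Fin n → ℝ} (hb : b ≠ 0) :
    0 < ∑ i, ∑ j, b i * b j * exp (s * ⟪x i, x j⟫) := by
  obtain ⟨k, hk⟩ : ∃ k, 0 < ∑ i, ∑ j, b i * b j * ⟪x i, x j⟫ ^ k := by
    by_contra! h
    obtain ⟨y, hy⟩ := exists_injective_inner hx
    refine hb (eq_zero_of_forall_pow_sum_mul_pow_eq_zero hy fun k => ?_)
    exact sum_mul_inner_pow_eq_zero_of_sum_sum_mul_inner_pow_eq_zero
      ((h k).antisymm (sum_sum_mul_inner_pow_nonneg x b k)) y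
  refine hasSum_lt (f := 0) (i := k) (fun m => ?_) ?_ hasSum_zero
    (hasSum_sum_sum_mul_exp_mul_inner x b s)
  · have := sum_sum_mul_inner_pow_nonneg x b m
    simp only [Pi.zero_apply]
    positivity
  · simp only [Pi.zero_apply]
    positivity

theorem exp_neg_norm_sub_sq_div (x y : E) (t : ℝ) :
    exp (-‖x - y‖ ^ 2 / t)
      = exp (-‖x‖ ^ 2 / t) * exp (-‖y‖ ^ 2 / t) * exp (2 / t * ⟪x, y⟫) := by
  rw [← exp_add, ← exp_add, norm_sub_sq_real]
  ring_nf

end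

/-- **Strict positive definiteness of the Gaussian kernel matrix.** Let `t > 0` and let
`x₁, …, xₙ` be pairwise distinct points in `ℝ^d`. Then the matrix with entries
`exp(−‖xᵢ − xⱼ‖²/t)` is positive definite: for every nonzero `c ∈ ℝⁿ`,
`Σᵢ Σⱼ cᵢ cⱼ exp(−‖xᵢ − xⱼ‖²/t) > 0`. -/
theorem gaussian_kernel_matrix_posDef {d n : ℕ} (t : ℝ) (ht : 0 < t)
    (x : Fin n → EuclideanSpace ℝ (Fin d)) (hx : Function.Injective x)
    (c : Fin n → ℝ) (hc : c ≠ 0) :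
    0 < ∑ i : Fin n, ∑ j : Fin n, c i * c j * Real.exp (-‖x i - x j‖ ^ 2 / t) := by
  set b : Fin n → ℝ := fun i => c i * exp (-‖x i‖ ^ 2 / t)
  have hb : b ≠ 0 := fun h => hc <| funext fun i => by
    simpa [b, exp_ne_zero] using congrFun h i
  have hfactor (i j : Fin n) : c i * c j * exp (-‖x i - x j‖ ^ 2 / t)
      = b i * b j * exp (2 / t * ⟪x i, x j⟫) := by
    rw [exp_neg_norm_sub_sq_div]
    ring
  simp only [hfactor]
  exact sum_sum_mul_exp_mul_inner_pos (div_pos two_pos ht) hx hb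
end
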